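/- arXiv:1604.04860 — 2 statements merged into one kernel-verified Lean document; each statement's English description precedes it below -/
import Mathlib

section
/- Let f be strictly concave increasing. Fix m < n and suppose q is feasible for the constraints q_i ≥ Ē_i (all i) and ∑_{i=1}^j q_i ≤ ∑_{i=1}^j (Ē_i + α H_i) (all j), with q_n < q_m and q_m > Ē_m. Then there exists ε > 0 such that the modified vector q' with q'_m = q_m - ε, q'_n = q_n + ε, q'_i = q_i otherwise, is still feasible and satisfies ∑_i f(q'_i) > ∑_i f(q_i). Hence q is not optimal. -/
open Finset

theorem StrictConcaveOn.add_lt_add_of_transfer {s : Set ℝ} {f : ℝ → ℝ}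
    (hf : StrictConcaveOn ℝ s f) {a c ε : ℝ} (ha : a ∈ s) (hc : c ∈ s)
    (hε : 0 < ε) (hεc : ε < c - a) :
    f a + f c < f (a + ε) + f (c - ε) := by
  -- `a + ε` and `c - ε` are the convex combinations of `a, c` with weights `(1 - t, t)` and
  -- `(t, 1 - t)`; adding the two strict concavity inequalities gives the claim.
  set t := ε / (c - a)
  have ht0 : 0 < t := div_pos hε (by linarith)
  have ht1 : t < 1 := (div_lt_one (by linarith)).2 hεc
  have hεt : t * (c - a) = ε := div_mul_cancel₀ ε (by linarith)
  have hlow := hf.2 ha hc (by linarith) (sub_pos.2 ht1) ht0 (by ring)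
  have hhigh := hf.2 ha hc (by linarith) ht0 (sub_pos.2 ht1) (by ring)
  simp only [smul_eq_mul] at hlow hhigh
  rw [show (1 - t) * a + t * c = a + ε by linear_combination hεt] at hlow
  rw [show t * a + (1 - t) * c = c - ε by linear_combination -hεt] at hhigh
  linarith

section Transfer

variable {ι : Type*} [DecidableEq ι]

def transfer (q : ι → ℝ) (m n : ι) (ε : ℝ) : ι → ℝ :=
  fun i => if i = m then q m - ε else if i = n then q n + ε else q i

variable {q : ι → ℝ} {m n : ι} {ε : ℝ}

theorem transfer_eq_sub_add_single (hmn : m ≠ n) :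
    transfer q m n ε = q - Pi.single m ε + Pi.single n ε := by
  funext i
  by_cases him : i = m
  · subst him; simp [transfer, hmn]
  · by_cases hin : i = n
    · subst hin; simp [transfer, him]
    · simp [transfer, him, hin]

theorem sum_transfer (hmn : m ≠ n) (s : Finset ι) :
    ∑ i ∈ s, transfer q m n ε i =
      ∑ i ∈ s, q i - (if m ∈ s then ε else 0) + (if n ∈ s then ε else 0) := by
  simp only [transfer_eq_sub_add_single hmn, Pi.add_apply, Pi.sub_apply, sum_add_distrib,
    sum_sub_distrib, sum_pi_single']

theorem sum_comp_transfer [Fintype ι] (g : ℝ → ℝ) (hmn : m ≠ n) :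
    ∑ i, g (transfer q m n ε i) =
      ∑ i, g (q i) + (g (q m - ε) - g (q m)) + (g (q n + ε) - g (q n)) := by
  have hdiff : ∑ i, (g (transfer q m n ε i) - g (q i)) =
      (g (q m - ε) - g (q m)) + (g (q n + ε) - g (q n)) := by
    rw [Fintype.sum_eq_add m n hmn fun i ⟨him, hin⟩ => by simp [transfer, him, hin]]
    simp [transfer, hmn.symm]
  rw [sum_sub_distrib] at hdiff
  linarith

theorem le_transfer {lo : ι → ℝ} (hlo : ∀ i, lo i ≤ q i) (hε : 0 ≤ ε)
    (hεm : ε ≤ q m - lo m) (i : ι) : lo i ≤ transfer q m n ε i := by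
  unfold transfer
  split_ifs with him hin
  · subst him; linarith
  · subst hin; linarith [hlo i]
  · exact hlo i

/-- A prefix `Iic j` containing `n` also contains `m`, so no prefix sum increases. -/
theorem sum_Iic_transfer_le [Preorder ι] [LocallyFiniteOrderBot ι] {b : ι → ℝ}
    (hq : ∀ j, ∑ i ∈ Iic j, q i ≤ b j) (hmn : m < n) (hε : 0 ≤ ε) (j : ι) :
    ∑ i ∈ Iic j, transfer q m n ε i ≤ b j := by
  rw [sum_transfer hmn.ne]
  have hqj := hq j
  by_cases hn : n ∈ Iic j
  · have hm : m ∈ Iic j := mem_Iic.2 (hmn.le.trans (mem_Iic.1 hn))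
    simp only [hm, hn, if_true]
    linarith
  · by_cases hm : m ∈ Iic j <;> simp only [hm, hn, if_true, if_false] <;> linarith

theorem StrictConcaveOn.sum_lt_sum_transfer [Fintype ι] {s : Set ℝ} {f : ℝ → ℝ}
    (hf : StrictConcaveOn ℝ s f) (hm : q m ∈ s) (hn : q n ∈ s)
    (hε : 0 < ε) (hεq : ε < q m - q n) :
    ∑ i, f (q i) < ∑ i, f (transfer q m n ε i) := by
  have hmn : m ≠ n := by rintro rfl; linarith
  have := hf.add_lt_add_of_transfer hn hm hε hεq
  rw [sum_comp_transfer f hmn]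
  linarith

end Transfer

theorem stmt_5_general (N : ℕ)
    (Ebar H : Fin N → ℝ)
    (hEbar : ∀ i, 0 ≤ Ebar i)
    (α : ℝ)
    (f : ℝ → ℝ)
    (hconc : StrictConcaveOn ℝ (Set.Ici 0) f)
    (q : Fin N → ℝ)
    (hfeas : (∀ i, Ebar i ≤ q i) ∧
      (∀ j : Fin N, ∑ i ∈ Iic j, q i ≤ ∑ i ∈ Iic j, (Ebar i + α * H i)))
    (m n : Fin N) (hmn : m < n) (hq : q n < q m) (hqm : Ebar m < q m) :
    ∃ ε > (0 : ℝ),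
      (let q' : Fin N → ℝ := fun i => if i = m then q m - ε
          else if i = n then q n + ε else q i
       (∀ i, Ebar i ≤ q' i) ∧
        (∀ j : Fin N, ∑ i ∈ Iic j, q' i ≤
          ∑ i ∈ Iic j, (Ebar i + α * H i)) ∧
        ∑ i, f (q i) < ∑ i, f (q' i)) := by
  obtain ⟨hlo, hcum⟩ := hfeas
  set ε := min (q m - Ebar m) ((q m - q n) / 2)
  have hε : 0 < ε := lt_min (by linarith) (by linarith)
  have hεm : ε ≤ q m - Ebar m := min_le_left _ _
  have hεq : ε < q m - q n := (min_le_right _ _).trans_lt (by linarith)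
  have hqn : q n ∈ Set.Ici (0 : ℝ) := (hEbar n).trans (hlo n)
  have hqm' : q m ∈ Set.Ici (0 : ℝ) := (hEbar m).trans (hlo m)
  exact ⟨ε, hε, le_transfer hlo hε.le hεm, sum_Iic_transfer_le hcum hmn hε.le,
    hconc.sum_lt_sum_transfer hqm' hqn hε hεq⟩

/-- Perturbation argument for Lemma 4: if `q n < q m` for `m < n` and
`q m > Ē m`, a small transfer of energy from slot `m` to slot `n` stays
feasible and strictly increases the objective, so `q` is not optimal. -/
theorem stmt_5 (N : ℕ) (hN : 0 < N)
    (Ebar H : Fin N → ℝ)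
    (hEbar : ∀ i, 0 ≤ Ebar i) (hH : ∀ i, 0 ≤ H i)
    (α : ℝ) (hα0 : 0 ≤ α) (hα1 : α ≤ 1)
    (f : ℝ → ℝ)
    (hconc : StrictConcaveOn ℝ (Set.Ici 0) f)
    (hmono : StrictMonoOn f (Set.Ici 0))
    (q : Fin N → ℝ)
    (hfeas : (∀ i, Ebar i ≤ q i) ∧
      (∀ j : Fin N, ∑ i ∈ Iic j, q i ≤ ∑ i ∈ Iic j, (Ebar i + α * H i)))
    (m n : Fin N) (hmn : m < n) (hq : q n < q m) (hqm : Ebar m < q m) :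
    ∃ ε > (0 : ℝ),
      (let q' : Fin N → ℝ := fun i => if i = m then q m - ε
          else if i = n then q n + ε else q i
       (∀ i, Ebar i ≤ q' i) ∧
        (∀ j : Fin N, ∑ i ∈ Iic j, q' i ≤
          ∑ i ∈ Iic j, (Ebar i + α * H i)) ∧
        ∑ i, f (q i) < ∑ i, f (q' i)) :=
  stmt_5_general N Ebar H hEbar α f hconc q hfeas m n hmn hq hqm
end

section
/- In the joint problem of maximizing ∑_{i=1}^N r_i over rates r, receiver rates r̄, and transfers δ subject to (b) ∑_{i=1}^j g⁻¹(r_i) ≤ ∑_{i=1}^j E_i, (c) ∑_{i=1}^j φ(r̄_i) ≤ ∑_{i=1}^j (Ē_i + α δ_i), (d) ∑_{i=1}^j δ_i ≤ ∑_{i=1}^j H_i, (e) φ(r̄_j) ≥ Ē_j, and (f) r_j ≤ r̄_j for all j: replacing constraints (c) and (d) by (c') ∑_{i=1}^j φ(r̄_i) ≤ ∑_{i=1}^j (Ē_i + α H_i) yields the same optimal value of ∑ r_i. -/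
open Finset

/-! Transferring the whole harvest immediately, δ = H, satisfies (d) with equality, and since
α ≥ 0 any δ obeying (d) makes the right-hand side of (c) at most that of (c'). Hence the two
problems have the same feasible rate vectors r, and so the same set of objective values. -/

theorem Finset.sum_add_mul_le_sum_add_mul {ι R : Type*} [Semiring R] [PartialOrder R]
    [IsOrderedRing R] (s : Finset ι) (a δ H : ι → R) {α : R} (hα : 0 ≤ α)
    (h : ∑ i ∈ s, δ i ≤ ∑ i ∈ s, H i) :
    ∑ i ∈ s, (a i + α * δ i) ≤ ∑ i ∈ s, (a i + α * H i) := by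
  simp only [sum_add_distrib, ← mul_sum]
  gcongr

theorem stmt_10_general (N : ℕ)
    (E Ebar H : Fin N → ℝ)
    (hH : ∀ i, 0 ≤ H i)
    (α : ℝ) (hα0 : 0 ≤ α)
    (ginv φ : ℝ → ℝ) :
    sSup {v : ℝ | ∃ r rbar δ : Fin N → ℝ,
        (∀ i, 0 ≤ r i) ∧ (∀ i, 0 ≤ rbar i) ∧ (∀ i, 0 ≤ δ i) ∧
        (∀ j : Fin N, ∑ i ∈ Iic j, ginv (r i) ≤ ∑ i ∈ Iic j, E i) ∧
        (∀ j : Fin N, ∑ i ∈ Iic j, φ (rbar i) ≤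
          ∑ i ∈ Iic j, (Ebar i + α * δ i)) ∧
        (∀ j : Fin N, ∑ i ∈ Iic j, δ i ≤ ∑ i ∈ Iic j, H i) ∧
        (∀ j, Ebar j ≤ φ (rbar j)) ∧
        (∀ j, r j ≤ rbar j) ∧
        v = ∑ i, r i} =
    sSup {v : ℝ | ∃ r rbar : Fin N → ℝ,
        (∀ i, 0 ≤ r i) ∧ (∀ i, 0 ≤ rbar i) ∧
        (∀ j : Fin N, ∑ i ∈ Iic j, ginv (r i) ≤ ∑ i ∈ Iic j, E i) ∧
        (∀ j : Fin N, ∑ i ∈ Iic j, φ (rbar i) ≤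
          ∑ i ∈ Iic j, (Ebar i + α * H i)) ∧
        (∀ j, Ebar j ≤ φ (rbar j)) ∧
        (∀ j, r j ≤ rbar j) ∧
        v = ∑ i, r i} := by
  congr 1
  ext v
  constructor
  · rintro ⟨r, rbar, δ, hr, hrbar, -, hb, hc, hd, he, hf, hv⟩
    exact ⟨r, rbar, hr, hrbar, hb,
      fun j ↦ (hc j).trans (sum_add_mul_le_sum_add_mul _ _ _ _ hα0 (hd j)), he, hf, hv⟩
  · rintro ⟨r, rbar, hr, hrbar, hb, hc, he, hf, hv⟩
    exact ⟨r, rbar, H, hr, hrbar, hH, hb, hc, fun _ ↦ le_rfl, he, hf, hv⟩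

/-- Application of Lemma 1 to problem (11): in the joint transmitter /
receiver / helper problem, replacing the transfer constraints (c),(d) by the
immediate-transfer constraint (c') does not change the optimal value. -/
theorem stmt_10 (N : ℕ) (hN : 0 < N)
    (E Ebar H : Fin N → ℝ)
    (hE : ∀ i, 0 ≤ E i) (hEbar : ∀ i, 0 ≤ Ebar i) (hH : ∀ i, 0 ≤ H i)
    (α : ℝ) (hα0 : 0 ≤ α) (hα1 : α ≤ 1)
    (ginv φ : ℝ → ℝ)
    (hgconv : ConvexOn ℝ (Set.Ici 0) ginv)
    (hgmono : MonotoneOn ginv (Set.Ici 0))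
    (hφconv : ConvexOn ℝ (Set.Ici 0) φ)
    (hφmono : MonotoneOn φ (Set.Ici 0))
    (hφ0 : φ 0 = 0) :
    sSup {v : ℝ | ∃ r rbar δ : Fin N → ℝ,
        (∀ i, 0 ≤ r i) ∧ (∀ i, 0 ≤ rbar i) ∧ (∀ i, 0 ≤ δ i) ∧
        (∀ j : Fin N, ∑ i ∈ Iic j, ginv (r i) ≤ ∑ i ∈ Iic j, E i) ∧
        (∀ j : Fin N, ∑ i ∈ Iic j, φ (rbar i) ≤
          ∑ i ∈ Iic j, (Ebar i + α * δ i)) ∧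
        (∀ j : Fin N, ∑ i ∈ Iic j, δ i ≤ ∑ i ∈ Iic j, H i) ∧
        (∀ j, Ebar j ≤ φ (rbar j)) ∧
        (∀ j, r j ≤ rbar j) ∧
        v = ∑ i, r i} =
    sSup {v : ℝ | ∃ r rbar : Fin N → ℝ,
        (∀ i, 0 ≤ r i) ∧ (∀ i, 0 ≤ rbar i) ∧
        (∀ j : Fin N, ∑ i ∈ Iic j, ginv (r i) ≤ ∑ i ∈ Iic j, E i) ∧
        (∀ j : Fin N, ∑ i ∈ Iic j, φ (rbar i) ≤
          ∑ i ∈ Iic j, (Ebar i + α * H i)) ∧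
        (∀ j, Ebar j ≤ φ (rbar j)) ∧
        (∀ j, r j ≤ rbar j) ∧
        v = ∑ i, r i} :=
  stmt_10_general N E Ebar H hH α hα0 ginv φ
end
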